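/- Let ε ∈ [0,1], let P be a 1-dimensional linear subspace of ℝ^n, let X be a k-dimensional linear subspace of ℝ^n, and let w ∈ X be a unit vector. If δ(P, X) > ε, then |π_P(w) − w| ≥ ε/2, where π_P is the orthogonal projection onto P. -/

import Mathlib

open MeasureTheory Set ENNReal
noncomputable section

abbrev E (n : ℕ) := EuclideanSpace ℝ (Fin n)

def projL {n : ℕ} (V : Submodule ℝ (E n)) : E n →L[ℝ] E n :=
  V.subtypeL.comp (V.orthogonalProjection)

/-- δ(P,X) := |v − π_X(v)| for a line P spanned by the unit vector v. -/
def deltaLine {n : ℕ} (v : E n) (X : Submodule ℝ (E n)) : ℝ := ‖v - projL X v‖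

/-!
Write `p` for the projection of `v` onto `X`. For `w ∈ X` the vector `v - p` is orthogonal to `w`,
so `⟪v, w⟫ = ⟪p, w⟫` and Cauchy–Schwarz bounds the projection `⟪v, w⟫ • v` of `w` onto the line
by `‖p‖`. Pythagoras on both sides then gives
`‖w - π_P w‖² = 1 - ⟪v, w⟫² ≥ 1 - ‖p‖² = δ(P, X)²`; and `δ(P, X) ≥ ε / 2` since `δ(P, X) > ε` and
`δ(P, X) ≥ 0`.
-/

open RealInnerProductSpace

namespace Submodule

variable {F : Type*} [NormedAddCommGroup F] [InnerProductSpace ℝ F]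

theorem norm_sub_starProjection_sq (K : Submodule ℝ F) [K.HasOrthogonalProjection] (x : F) :
    ‖x - K.starProjection x‖ ^ 2 = ‖x‖ ^ 2 - ‖K.starProjection x‖ ^ 2 := by
  rw [norm_sq_eq_add_norm_sq_starProjection x K, starProjection_orthogonal_val]
  ring

theorem norm_starProjection_unit_singleton {v : F} (hv : ‖v‖ = 1) (w : F) :
    ‖(ℝ ∙ v).starProjection w‖ = |⟪v, w⟫| := by
  rw [starProjection_unit_singleton ℝ hv, norm_smul, hv, mul_one, Real.norm_eq_abs]

theorem inner_starProjection_left_of_mem (K : Submodule ℝ F) [K.HasOrthogonalProjection]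
    (v : F) {w : F} (hw : w ∈ K) : ⟪K.starProjection v, w⟫ = ⟪v, w⟫ := by
  rw [inner_starProjection_left_eq_right, starProjection_eq_self_iff.mpr hw]

theorem norm_mul_norm_sub_starProjection_le {K : Submodule ℝ F} [K.HasOrthogonalProjection]
    {v w : F} (hv : ‖v‖ = 1) (hw : w ∈ K) :
    ‖w‖ * ‖v - K.starProjection v‖ ≤ ‖w - (ℝ ∙ v).starProjection w‖ := by
  have hline : ‖(ℝ ∙ v).starProjection w‖ ≤ ‖K.starProjection v‖ * ‖w‖ := by
    rw [norm_starProjection_unit_singleton hv, ← K.inner_starProjection_left_of_mem v hw]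
    exact abs_real_inner_le_norm _ _
  have hline_sq := pow_le_pow_left₀ (norm_nonneg _) hline 2
  rw [← pow_le_pow_iff_left₀ (by positivity) (norm_nonneg _) two_ne_zero, mul_pow,
    norm_sub_starProjection_sq, norm_sub_starProjection_sq, hv]
  nlinarith

end Submodule

theorem projL_eq_starProjection {n : ℕ} (V : Submodule ℝ (E n)) : projL V = V.starProjection :=
  rfl

theorem stmt1_general (n : ℕ) (ε : ℝ)
    (v : E n) (hv : ‖v‖ = 1)
    (X : Submodule ℝ (E n))
    (w : E n) (hwX : w ∈ X) (hw : ‖w‖ = 1)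
    (h : deltaLine v X > ε) :
    ‖projL (Submodule.span ℝ {v}) w - w‖ ≥ ε / 2 := by
  have hδ : deltaLine v X ≤ ‖projL (Submodule.span ℝ {v}) w - w‖ := by
    simpa only [deltaLine, projL_eq_starProjection, hw, one_mul, norm_sub_rev w] using
      Submodule.norm_mul_norm_sub_starProjection_le hv hwX
  have hδ_nonneg : 0 ≤ deltaLine v X := norm_nonneg _
  linarith

theorem stmt1 (n k : ℕ) (ε : ℝ) (hε : ε ∈ Set.Icc (0 : ℝ) 1)
    (v : E n) (hv : ‖v‖ = 1)
    (X : Submodule ℝ (E n)) (hX : Module.finrank ℝ X = k)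
    (w : E n) (hwX : w ∈ X) (hw : ‖w‖ = 1)
    (h : deltaLine v X > ε) :
    ‖projL (Submodule.span ℝ {v}) w - w‖ ≥ ε / 2 :=
  stmt1_general n ε v hv X w hwX hw h
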